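/- If P is a nonempty family of subsets of X closed under finite intersections and P ⊆ P_seq, then the Q_P-topology on X/P is regular (T3). -/

import Mathlib

open Set Topology

/-- The equivalence relation identifying points lying in exactly the same members of `P`. -/
def pSetoid {X : Type*} (P : Set (Set X)) : Setoid X where
  r x y := ∀ V ∈ P, x ∈ V ↔ y ∈ V
  iseqv := ⟨fun _ _ _ => Iff.rfl, fun h V hV => (h V hV).symm,
    fun h1 h2 V hV => (h1 V hV).trans (h2 V hV)⟩

/-- The quotient `X/P`. -/
def pQuot {X : Type*} (P : Set (Set X)) : Type _ := Quotient (pSetoid P)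

/-- The `Q_P`-map `q : X → X/P`. -/
def pMap {X : Type*} (P : Set (Set X)) : X → pQuot P := Quotient.mk (pSetoid P)

/-- The `Q_P`-topology on `X/P`, generated by the images `q[V]`, `V ∈ P`. -/
def pTop {X : Type*} (P : Set (Set X)) : TopologicalSpace (pQuot P) :=
  TopologicalSpace.generateFrom {S | ∃ V ∈ P, S = pMap P '' V}

/-- `R_seq`: sets `W` that are unions `⋃ₙ Uₙ` with `Uₖ ⊆ X \ Vₖ ⊆ Uₖ₊₁`, `Uₙ, Vₙ ∈ R`. -/
def seqFam {X : Type*} (R : Set (Set X)) : Set (Set X) :=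
  {W | ∃ U V : ℕ → Set X, (∀ n, U n ∈ R) ∧ (∀ n, V n ∈ R) ∧
    (∀ k, U k ⊆ (V k)ᶜ ∧ (V k)ᶜ ⊆ U (k + 1)) ∧ (⋃ n, U n) = W}

/-- The family of cozero sets of `X`. -/
def cozeroFam (X : Type*) [TopologicalSpace X] : Set (Set X) :=
  {W | ∃ f : X → ℝ, Continuous f ∧ (∀ x, f x ∈ Set.Icc (0 : ℝ) 1) ∧ W = f ⁻¹' Set.Ioc 0 1}

/-- A skeletal map: a continuous surjection such that the closure of the image of every
nonempty open set has nonempty interior. -/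
def IsSkeletal {X Y : Type*} [TopologicalSpace X] [TopologicalSpace Y] (f : X → Y) : Prop :=
  Continuous f ∧ Function.Surjective f ∧
    ∀ U : Set X, IsOpen U → U.Nonempty → (interior (closure (f '' U))).Nonempty

/-- A skeletal family of open subsets of `X`. -/
def SkeletalFamily {X : Type*} [TopologicalSpace X] (P : Set (Set X)) : Prop :=
  ∀ V : Set X, IsOpen V → V.Nonempty →
    ∃ W ∈ P, ∀ U ∈ P, U ⊆ W → U.Nonempty → (U ∩ V).Nonempty

/-- A π-base: a family of nonempty open sets such that every nonempty open set contains
a member of the family. -/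
def IsPiBase {Y : Type*} [TopologicalSpace Y] (B : Set (Set Y)) : Prop :=
  (∀ b ∈ B, IsOpen b ∧ b.Nonempty) ∧ ∀ U : Set Y, IsOpen U → U.Nonempty → ∃ b ∈ B, b ⊆ U

/-- A strategy for Player I in the open-open game produces nonempty open sets. -/
def ValidStrategy {X : Type*} [TopologicalSpace X] (σ : List (Set X) → Set X) : Prop :=
  ∀ l : List (Set X), IsOpen (σ l) ∧ (σ l).Nonempty

/-- `B` is a play of Player II against the strategy `σ` of Player I: each `B n` is a
nonempty open subset of the set produced by `σ` from the previous moves of Player II. -/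
def IsPlayAgainst {X : Type*} [TopologicalSpace X] (σ : List (Set X) → Set X)
    (B : ℕ → Set X) : Prop :=
  ∀ n, IsOpen (B n) ∧ (B n).Nonempty ∧ B n ⊆ σ (List.ofFn (fun i : Fin n => B i))

/-- A winning strategy for Player I in the open-open game: every play of Player II against
it has dense union. -/
def WinningStrategy {X : Type*} [TopologicalSpace X] (σ : List (Set X) → Set X) : Prop :=
  ValidStrategy σ ∧ ∀ B : ℕ → Set X, IsPlayAgainst σ B → Dense (⋃ n, B n)

/-- A space is I-favorable if Player I has a winning strategy in the open-open game. -/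
def IFavorable (X : Type*) [TopologicalSpace X] : Prop :=
  ∃ σ : List (Set X) → Set X, WinningStrategy σ

/-- `P` is closed under the strategy `σ`. -/
def ClosedUnderStrategy {X : Type*} [TopologicalSpace X] (P : Set (Set X))
    (σ : List (Set X) → Set X) : Prop :=
  σ [] ∈ P ∧ ∀ l : List (Set X), (∀ b ∈ l, b ∈ P) → σ l ∈ P

/-- The limit of an inverse system, as the subspace of threads in the product. -/
abbrev invLimit {ι : Type*} [Preorder ι] (Y : ι → Type*)
    (bond : ∀ i j : ι, i ≤ j → Y j → Y i) : Type _ :=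
  {u : ∀ i, Y i // ∀ (i j : ι) (h : i ≤ j), bond i j h (u j) = u i}

/-- The topology of the inverse limit, with explicitly given topologies on factors. -/
def invLimitTop {ι : Type*} [Preorder ι] (Y : ι → Type*) (t : ∀ i, TopologicalSpace (Y i))
    (bond : ∀ i j : ι, i ≤ j → Y j → Y i) : TopologicalSpace (invLimit Y bond) :=
  @instTopologicalSpaceSubtype _ _ (@Pi.topologicalSpace ι Y t)

/-- σ-completeness of an inverse system: each countable chain of indices has a least upper
bound `l`, and the canonical map from `Y l` to the limit of the countable subsystem is a
homeomorphism (an embedding whose range is the set of threads). -/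
def SigmaComplete {ι : Type*} [Preorder ι] (Y : ι → Type*) (t : ∀ i, TopologicalSpace (Y i))
    (bond : ∀ i j : ι, i ≤ j → Y j → Y i) : Prop :=
  (∀ s : ℕ → ι, Monotone s → ∃ l, IsLUB (Set.range s) l) ∧
  ∀ (s : ℕ → ι) (hs : Monotone s) (l : ι) (hl : IsLUB (Set.range s) l),
    @IsEmbedding (Y l) (∀ n, Y (s n)) (t l) (@Pi.topologicalSpace ℕ _ (fun n => t (s n)))
      (fun x n => bond (s n) l (hl.1 (Set.mem_range_self n)) x) ∧
    Set.range (fun (x : Y l) (n : ℕ) => bond (s n) l (hl.1 (Set.mem_range_self n)) x) =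
      {u : ∀ n, Y (s n) | ∀ (n m : ℕ) (h : n ≤ m), bond (s n) (s m) (hs h) (u m) = u n}

/-- A σ-complete inverse system of topological spaces over a directed partial order,
with continuous surjective bonding maps. -/
structure TopInvSystem : Type 1 where
  ι : Type
  [ord : PartialOrder ι]
  directed : IsDirected ι (· ≤ ·)
  Y : ι → Type
  [t : ∀ i, TopologicalSpace (Y i)]
  bond : ∀ i j : ι, i ≤ j → Y j → Y i
  bond_refl : ∀ i (x : Y i), bond i i le_rfl x = x
  bond_comp : ∀ (i j k : ι) (hij : i ≤ j) (hjk : j ≤ k) (x : Y k),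
    bond i j hij (bond j k hjk x) = bond i k (hij.trans hjk) x
  bond_cont : ∀ (i j : ι) (h : i ≤ j), Continuous (bond i j h)
  bond_surj : ∀ (i j : ι) (h : i ≤ j), Function.Surjective (bond i j h)
  sigmaComplete : SigmaComplete Y t bond

instance (S : TopInvSystem) : PartialOrder S.ι := S.ord
instance (S : TopInvSystem) (i : S.ι) : TopologicalSpace (S.Y i) := S.t i

/-- The limit of a `TopInvSystem`. -/
def TopInvSystem.Limit (S : TopInvSystem) : Type := invLimit S.Y S.bond

instance (S : TopInvSystem) : TopologicalSpace S.Limit :=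
  inferInstanceAs (TopologicalSpace (invLimit S.Y S.bond))

/-- The bonding map `X/R → X/P` for `P ⊆ R`, sending `[x]_R` to `[x]_P`. -/
def pBond {X : Type*} (P R : Set (Set X)) (h : P ⊆ R) : pQuot R → pQuot P :=
  Quotient.lift (pMap P) (fun _ _ hab => Quotient.sound (fun V hV => hab V (h hV)))

/-- A `T`-club on a space `X` (with `T` the cozero sets): a collection of countable
subfamilies of `T`, each closed under a fixed winning strategy for Player I, closed under
finite unions and intersections, contained in its `seq`-family, which is cofinal among
countable subfamilies of `T` and closed under countable chains. -/
def TClub {X : Type*} [TopologicalSpace X] (C : Set (Set (Set X))) : Prop :=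
  ∃ σ : List (Set X) → Set X, WinningStrategy σ ∧
    (∀ P ∈ C, P.Countable ∧ P ⊆ cozeroFam X ∧ ClosedUnderStrategy P σ ∧
      (∀ A ∈ P, ∀ B ∈ P, A ∪ B ∈ P ∧ A ∩ B ∈ P) ∧ P ⊆ seqFam P) ∧
    (∀ Q : Set (Set X), Q.Countable → Q ⊆ cozeroFam X → ∃ P ∈ C, Q ⊆ P) ∧
    (∀ f : ℕ → Set (Set X), (∀ n, f n ∈ C) → Monotone f → (⋃ n, f n) ∈ C)

/-
The images `q[V]`, `V ∈ P`, are open, saturated and form a subbasis, so by the subbasis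
criterion for regularity it suffices to separate a point `q x ∈ q[W]` from the complement of
`q[W]`. If `Uₖ, Vₖ` witness `W ∈ P_seq` and `x ∈ Uₖ`, then `q[Uₖ]` and `q[Vₖ]` are disjoint open
sets, the first containing `q x`, the second the complement of `q[W]`, as `X \ Vₖ ⊆ Uₖ₊₁ ⊆ W`.
-/

lemma exists_disjoint_of_mem_seqFam {X : Type*} {R : Set (Set X)} {W : Set X}
    (hW : W ∈ seqFam R) {x : X} (hx : x ∈ W) : ∃ U ∈ R, ∃ V ∈ R, x ∈ U ∧ Disjoint U V ∧ Wᶜ ⊆ V := by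
  obtain ⟨U, V, hU, hV, hUV, rfl⟩ := hW
  obtain ⟨k, hxk⟩ := mem_iUnion.mp hx
  refine ⟨U k, hU k, V k, hV k, hxk, subset_compl_iff_disjoint_right.mp (hUV k).1, ?_⟩
  exact fun y hy => by_contra fun hyV => hy (mem_iUnion_of_mem (k + 1) ((hUV k).2 hyV))

section

variable {X : Type*} {P : Set (Set X)}

attribute [local instance] pTop

lemma pMap_mem_image_iff {V : Set X} (hV : V ∈ P) (x : X) :
    pMap P x ∈ pMap P '' V ↔ x ∈ V :=
  ⟨fun ⟨_, hy, hyx⟩ => (Quotient.exact hyx V hV).mp hy, mem_image_of_mem _⟩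

lemma isOpen_image_pMap {V : Set X} (hV : V ∈ P) : IsOpen (pMap P '' V) :=
  TopologicalSpace.GenerateOpen.basic _ ⟨V, hV, rfl⟩

lemma disjoint_image_pMap {U V : Set X} (hV : V ∈ P) (h : Disjoint U V) :
    Disjoint (pMap P '' U) (pMap P '' V) := by
  rw [Set.disjoint_left]
  rintro _ ⟨x, hxU, rfl⟩ hxV
  exact h.notMem_of_mem_left hxU ((pMap_mem_image_iff hV x).mp hxV)

lemma compl_image_pMap_subset {U V : Set X} (hU : U ∈ P) (hUV : Uᶜ ⊆ V) :
    (pMap P '' U)ᶜ ⊆ pMap P '' V := by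
  rintro ⟨x⟩ hx
  exact ⟨x, hUV fun hxU => hx ((pMap_mem_image_iff hU x).mpr hxU), rfl⟩

lemma t0Space_pQuot : T0Space (pQuot P) := by
  refine t0Space_iff_inseparable _ |>.mpr ?_
  rintro ⟨x⟩ ⟨y⟩ hxy
  exact Quotient.sound fun V hV => (pMap_mem_image_iff hV x).symm.trans
    ((hxy.mem_open_iff (isOpen_image_pMap hV)).trans (pMap_mem_image_iff hV y))

lemma regularSpace_pQuot (hseq : P ⊆ seqFam P) : RegularSpace (pQuot P) := by
  refine (regularSpace_generateFrom (s := {S | ∃ V ∈ P, S = pMap P '' V}) rfl).mpr ?_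
  rintro _ ⟨W, hW, rfl⟩ _ ⟨x, hxW, rfl⟩
  obtain ⟨U, hU, V, hV, hxU, hUV, hWV⟩ := exists_disjoint_of_mem_seqFam (hseq hW) hxW
  exact Filter.disjoint_of_disjoint_of_mem (disjoint_image_pMap hU hUV.symm)
    ((isOpen_image_pMap hV).mem_nhdsSet.mpr (compl_image_pMap_subset hW hWV))
    ((isOpen_image_pMap hU).mem_nhds (mem_image_of_mem _ hxU))

end

theorem stmt6_general {X : Type*} (P : Set (Set X)) (hseq : P ⊆ seqFam P) :
    @T3Space (pQuot P) (pTop P) :=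
  letI := pTop P
  haveI := t0Space_pQuot (P := P)
  haveI := regularSpace_pQuot hseq
  { }

theorem stmt6 {X : Type*} (P : Set (Set X)) (hne : P.Nonempty)
    (hinter : ∀ U ∈ P, ∀ V ∈ P, U ∩ V ∈ P) (hseq : P ⊆ seqFam P) :
    @T3Space (pQuot P) (pTop P) :=
  stmt6_general P hseq
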